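/- arXiv:2102.04998 — 3 statements merged into one kernel-verified Lean document; each statement's English description precedes it below -/
import Mathlib

section
/- If the activation is h-smoothly approximately ReLU (for some h > 0) and the weights V satisfy ‖V‖ ≥ √(L + 1/2), then ‖∇_V J(V)‖ ≤ √((L+1)·p) · ‖V‖^{L+1} · min{ J(V), 1 }. -/
open scoped BigOperators
noncomputable section

abbrev Params (L p : ℕ) := EuclideanSpace ℝ ((Fin L × Fin p × Fin p) ⊕ Fin p)

def layerMat {L p : ℕ} (w : Params L p) (ℓ : Fin L) : Matrix (Fin p) (Fin p) ℝ :=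
  Matrix.of fun i j => w (Sum.inl (ℓ, i, j))

def outVec {L p : ℕ} (w : Params L p) : Fin p → ℝ := fun j => w (Sum.inr j)

def SmoothApproxReLU (φ : ℝ → ℝ) (h : ℝ) : Prop :=
  Differentiable ℝ φ ∧ φ 0 = 0 ∧
    (∀ z₁ z₂ : ℝ, |deriv φ z₁ - deriv φ z₂| ≤ (1 / h) * |z₁ - z₂|) ∧
    (∀ z : ℝ, |deriv φ z| ≤ 1) ∧ (∀ z : ℝ, |deriv φ z * z - φ z| ≤ h / 2)

def feat {L p : ℕ} (φ : ℝ → ℝ) (w : Params L p) (x : Fin p → ℝ) : ℕ → Fin p → ℝ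
  | 0 => x
  | ℓ + 1 =>
    if hl : ℓ < L then fun i => φ ((layerMat w ⟨ℓ, hl⟩).mulVec (feat φ w x ℓ) i)
    else feat φ w x ℓ

def netOut {L p : ℕ} (φ : ℝ → ℝ) (w : Params L p) (x : Fin p → ℝ) : ℝ :=
  ∑ j, outVec w j * feat φ w x L j

def lossS {L p : ℕ} (φ : ℝ → ℝ) (x : Fin p → ℝ) (y : ℝ) (w : Params L p) : ℝ :=
  Real.log (1 + Real.exp (-(y * netOut φ w x)))

def loss {L p n : ℕ} (φ : ℝ → ℝ) (x : Fin n → Fin p → ℝ) (y : Fin n → ℝ) (w : Params L p) : ℝ :=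
  (1 / (n : ℝ)) * ∑ s, lossS φ (x s) (y s) w

def enorm2 {p : ℕ} (v : Fin p → ℝ) : ℝ := Real.sqrt (∑ i, v i ^ 2)

def hmax (L p : ℕ) (J1 nV1 : ℝ) : ℝ :=
  min ((L : ℝ) ^ ((L : ℝ) / 2 - 3) * Real.log (1 / J1) / (24 * Real.sqrt p * nV1 ^ L)) 1

def alphaMax (L p : ℕ) (J1 nV1 h : ℝ) : ℝ :=
  min (h / (1024 * ((L : ℝ) + 1) ^ 2 * p * J1 * nV1 ^ (3 * L + 5)))
    (((L : ℝ) + 1 / 2) * nV1 ^ 2 /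
      (2 * L * ((L : ℝ) + 3 / 4) ^ 2 * J1 * Real.log (1 / J1) ^ ((2 : ℝ) / L)))

def Qtilde (L : ℕ) (J1 nV1 α : ℝ) : ℝ :=
  (L : ℝ) * ((L : ℝ) + 3 / 4) ^ 2 * α * J1 * Real.log (1 / J1) ^ ((2 : ℝ) / L) /
    (((L : ℝ) + 1 / 2) * nV1 ^ 2)

def lipGrad {L p : ℕ} (J : Params L p → ℝ) (v : Params L p) : ℝ :=
  Filter.limsup (fun w : Params L p => ‖gradient J v - gradient J w‖ / ‖v - w‖)
    (nhdsWithin v {v}ᶜ)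

/-!
The training loss is an average of `ℓ_y (f_V x_s)` with `ℓ_y t = log (1 + exp (-y t))`, and for
`|y| ≤ 1` we have `|ℓ_y' t| ≤ e / (1 + e) ≤ min (ℓ_y t) 1` where `e = exp (-y t)`.
Since `φ` is `1`-Lipschitz with `φ 0 = 0`, each layer multiplies the Euclidean norm of the
features by at most the Frobenius norm of its weight matrix, and the product rule shows, by
induction over the layers and using `‖V‖ ≥ 1`, that the directional derivative of `f_V` along `u`
is at most `‖V‖ ^ (L + 1)` times the sum of the norms of the `L + 1` blocks of `u`; by
Cauchy–Schwarz that sum is at most `√(L + 1) ‖u‖`.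
-/

attribute [local instance] Matrix.frobeniusNormedAddCommGroup Matrix.frobeniusNormedSpace

open Matrix

section EuclideanNorm

variable {p : ℕ}

lemma enorm2_eq_norm_toLp (v : Fin p → ℝ) : enorm2 v = ‖WithLp.toLp 2 v‖ := by
  simp [enorm2, EuclideanSpace.norm_eq]

lemma enorm2_nonneg (v : Fin p → ℝ) : 0 ≤ enorm2 v := Real.sqrt_nonneg _

lemma enorm2_add_le (a b : Fin p → ℝ) : enorm2 (a + b) ≤ enorm2 a + enorm2 b := by
  simpa only [enorm2_eq_norm_toLp, WithLp.toLp_add] using norm_add_le _ _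

lemma enorm2_le_of_abs_le {a b : Fin p → ℝ} (hab : ∀ i, |a i| ≤ |b i|) : enorm2 a ≤ enorm2 b :=
  Real.sqrt_le_sqrt (Finset.sum_le_sum fun i _ => sq_le_sq.mpr (hab i))

lemma abs_dotProduct_le (a b : Fin p → ℝ) : |a ⬝ᵥ b| ≤ enorm2 a * enorm2 b := by
  simpa [enorm2_eq_norm_toLp, EuclideanSpace.inner_eq_star_dotProduct, dotProduct_comm]
    using abs_real_inner_le_norm (WithLp.toLp 2 a) (WithLp.toLp 2 b)

lemma enorm2_mulVec_le (A : Matrix (Fin p) (Fin p) ℝ) (v : Fin p → ℝ) :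
    enorm2 (A *ᵥ v) ≤ ‖A‖ * enorm2 v := by
  simpa only [enorm2_eq_norm_toLp, ← frobenius_norm_replicateCol (ι := Unit),
    replicateCol_mulVec] using frobenius_norm_mul A (replicateCol Unit v)

lemma frobenius_norm_sq_eq {m n : Type*} [Fintype m] [Fintype n] (A : Matrix m n ℝ) :
    ‖A‖ ^ 2 = ∑ i, ∑ j, A i j ^ 2 := by
  rw [frobenius_norm_def, ← Real.sqrt_eq_rpow, Real.sq_sqrt (by positivity)]
  simp

lemma enorm2_sq (v : Fin p → ℝ) : enorm2 v ^ 2 = ∑ i, v i ^ 2 :=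
  Real.sq_sqrt (by positivity)

end EuclideanNorm

section Params

variable {L p : ℕ}

lemma norm_sq_eq_sum_layerMat (u : Params L p) :
    ‖u‖ ^ 2 = ∑ k, ‖layerMat u k‖ ^ 2 + enorm2 (outVec u) ^ 2 := by
  simp [EuclideanSpace.norm_sq_eq, Fintype.sum_sum_type, Fintype.sum_prod_type,
    frobenius_norm_sq_eq, enorm2_sq, layerMat, outVec]

lemma norm_layerMat_le (u : Params L p) (k : Fin L) : ‖layerMat u k‖ ≤ ‖u‖ := by
  refine le_of_sq_le_sq ?_ (norm_nonneg _)
  rw [norm_sq_eq_sum_layerMat]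
  have := Finset.single_le_sum (fun k _ => sq_nonneg ‖layerMat u k‖) (Finset.mem_univ k)
  nlinarith [sq_nonneg (enorm2 (outVec u))]

lemma enorm2_outVec_le (u : Params L p) : enorm2 (outVec u) ≤ ‖u‖ := by
  refine le_of_sq_le_sq ?_ (norm_nonneg _)
  rw [norm_sq_eq_sum_layerMat]
  have := Finset.sum_nonneg fun k (_ : k ∈ Finset.univ) => sq_nonneg ‖layerMat u k‖
  linarith

lemma sum_norm_layerMat_add_le (u : Params L p) :
    ∑ k, ‖layerMat u k‖ + enorm2 (outVec u) ≤ Real.sqrt ((L : ℝ) + 1) * ‖u‖ := by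
  set c : Fin L ⊕ Unit → ℝ := Sum.elim (fun k => ‖layerMat u k‖) fun _ => enorm2 (outVec u)
  have hsum : ∑ k, ‖layerMat u k‖ + enorm2 (outVec u) = ∑ i, c i := by
    simp [c, Fintype.sum_sum_type]
  have hsq : ‖u‖ ^ 2 = ∑ i, c i ^ 2 := by
    simp [c, Fintype.sum_sum_type, norm_sq_eq_sum_layerMat]
  have hcs := sq_sum_le_card_mul_sum_sq (s := Finset.univ) (f := c)
  rw [Finset.card_univ, Fintype.card_sum, Fintype.card_fin, Fintype.card_unit, ← hsq] at hcs
  refine le_of_sq_le_sq ?_ (by positivity)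
  rw [hsum, mul_pow, Real.sq_sqrt (by positivity)]
  exact_mod_cast hcs

end Params

namespace SmoothApproxReLU

variable {φ : ℝ → ℝ} {h : ℝ}

lemma abs_deriv_le (hφ : SmoothApproxReLU φ h) (z : ℝ) : |deriv φ z| ≤ 1 := hφ.2.2.2.1 z

lemma abs_le (hφ : SmoothApproxReLU φ h) (z : ℝ) : |φ z| ≤ |z| := by
  have hlip : LipschitzWith 1 φ := lipschitzWith_of_nnnorm_deriv_le hφ.1 fun z => by
    simpa [← NNReal.coe_le_coe, Real.norm_eq_abs] using hφ.abs_deriv_le z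
  simpa [Real.dist_eq, hφ.2.1] using hlip.dist_le_mul z 0

end SmoothApproxReLU

section Calculus

variable {E F G H : Type*} [NormedAddCommGroup E] [NormedSpace ℝ E] [FiniteDimensional ℝ E]
  [NormedAddCommGroup F] [NormedSpace ℝ F] [FiniteDimensional ℝ F]
  [NormedAddCommGroup G] [NormedSpace ℝ G] [NormedAddCommGroup H] [NormedSpace ℝ H]

lemma LinearMap.exists_hasFDerivAt_bilinear (B : E →ₗ[ℝ] F →ₗ[ℝ] G) {f : H → E} {g : H → F}
    {f' : H →L[ℝ] E} {g' : H →L[ℝ] F} {x : H} (hf : HasFDerivAt f f' x)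
    (hg : HasFDerivAt g g' x) :
    ∃ D : H →L[ℝ] G, HasFDerivAt (fun y => B (f y) (g y)) D x ∧
      ∀ u, D u = B (f x) (g' u) + B (f' u) (g x) := by
  let Bc : E →L[ℝ] F →L[ℝ] G :=
    LinearMap.toContinuousLinearMap (LinearMap.toContinuousLinearMap.toLinearMap ∘ₗ B)
  exact ⟨_, Bc.hasFDerivAt_of_bilinear hf hg, fun u => by simp [Bc]⟩

lemma exists_hasFDerivAt_comp_apply {ι : Type*} [Fintype ι] {φ : ℝ → ℝ}
    (hφ : Differentiable ℝ φ) {g : H → ι → ℝ} {D : H →L[ℝ] ι → ℝ} {x : H}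
    (hg : HasFDerivAt g D x) :
    ∃ D' : H →L[ℝ] ι → ℝ, HasFDerivAt (fun y i => φ (g y i)) D' x ∧
      ∀ u i, D' u i = deriv φ (g x i) * D u i :=
  ⟨_, hasFDerivAt_pi.2 fun i => (hφ _).hasDerivAt.comp_hasFDerivAt x (hasFDerivAt_pi'.1 hg i),
    fun u i => by simp⟩

end Calculus

section Network

variable {L p : ℕ}

def layerMatₗ (k : Fin L) : Params L p →ₗ[ℝ] Matrix (Fin p) (Fin p) ℝ where
  toFun w := layerMat w k
  map_add' _ _ := rfl
  map_smul' _ _ := rfl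

def outVecₗ : Params L p →ₗ[ℝ] Fin p → ℝ where
  toFun w := outVec w
  map_add' _ _ := rfl
  map_smul' _ _ := rfl

variable {φ : ℝ → ℝ} {h : ℝ}

lemma feat_succ (w : Params L p) (x : Fin p → ℝ) {ℓ : ℕ} (hl : ℓ < L) :
    feat φ w x (ℓ + 1) = fun i => φ ((layerMat w ⟨ℓ, hl⟩ *ᵥ feat φ w x ℓ) i) := by
  simp [feat, hl]

lemma enorm2_feat_le (hφ : SmoothApproxReLU φ h) (w : Params L p) {x : Fin p → ℝ}
    (hx : enorm2 x ≤ 1) : ∀ ℓ ≤ L, enorm2 (feat φ w x ℓ) ≤ ‖w‖ ^ ℓ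
  | 0, _ => by simpa [feat] using hx
  | ℓ + 1, hl => by
    rw [feat_succ w x hl]
    calc enorm2 (fun i => φ ((layerMat w ⟨ℓ, hl⟩ *ᵥ feat φ w x ℓ) i))
        ≤ enorm2 (layerMat w ⟨ℓ, hl⟩ *ᵥ feat φ w x ℓ) :=
          enorm2_le_of_abs_le fun i => hφ.abs_le _
      _ ≤ ‖layerMat w ⟨ℓ, hl⟩‖ * enorm2 (feat φ w x ℓ) := enorm2_mulVec_le _ _
      _ ≤ ‖w‖ * ‖w‖ ^ ℓ :=
          mul_le_mul (norm_layerMat_le w _) (enorm2_feat_le hφ w hx ℓ (Nat.le_of_succ_le hl))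
            (enorm2_nonneg _) (norm_nonneg w)
      _ = ‖w‖ ^ (ℓ + 1) := by ring

lemma sum_filter_lt_succ {M : Type*} [AddCommMonoid M] (f : Fin L → M) {ℓ : ℕ} (hl : ℓ < L) :
    ∑ k : Fin L with k.val < ℓ + 1, f k = ∑ k : Fin L with k.val < ℓ, f k + f ⟨ℓ, hl⟩ := by
  have hset : (Finset.univ.filter fun k : Fin L => (k : ℕ) < ℓ + 1)
      = insert ⟨ℓ, hl⟩ (Finset.univ.filter fun k : Fin L => (k : ℕ) < ℓ) := by
    ext k
    simp [Fin.ext_iff]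
    omega
  rw [hset, Finset.sum_insert (by simp), add_comm]

lemma exists_hasFDerivAt_feat (hφ : SmoothApproxReLU φ h) {x : Fin p → ℝ} (hx : enorm2 x ≤ 1)
    {V : Params L p} (hV : 1 ≤ ‖V‖) :
    ∀ ℓ ≤ L, ∃ D : Params L p →L[ℝ] Fin p → ℝ, HasFDerivAt (fun w => feat φ w x ℓ) D V ∧
      ∀ u, enorm2 (D u) ≤ ‖V‖ ^ ℓ * ∑ k : Fin L with k.val < ℓ, ‖layerMat u k‖
  | 0, _ => ⟨0, by simpa [feat] using hasFDerivAt_const (𝕜 := ℝ) x V, fun u => by simp [enorm2]⟩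
  | ℓ + 1, hl => by
    obtain ⟨D, hD, hDu⟩ := exists_hasFDerivAt_feat hφ hx hV ℓ (Nat.le_of_succ_le hl)
    set k : Fin L := ⟨ℓ, hl⟩
    set F := feat φ V x ℓ
    obtain ⟨P, hP, hPu⟩ := LinearMap.exists_hasFDerivAt_bilinear
      (Matrix.toLin'.toLinearMap ∘ₗ layerMatₗ (p := p) k) (hasFDerivAt_id V) hD
    obtain ⟨D', hD', hD'u⟩ := exists_hasFDerivAt_comp_apply hφ.1 hP
    have hF : enorm2 F ≤ ‖V‖ ^ (ℓ + 1) :=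
      (enorm2_feat_le hφ V hx ℓ (Nat.le_of_succ_le hl)).trans (pow_le_pow_right₀ hV ℓ.le_succ)
    refine ⟨D', ?_, fun u => ?_⟩
    · rw [funext fun w => feat_succ (φ := φ) w x hl]
      exact hD'
    calc enorm2 (D' u) ≤ enorm2 (layerMat V k *ᵥ D u + layerMat u k *ᵥ F) := by
          refine enorm2_le_of_abs_le fun i => ?_
          simp only [hD'u, hPu, abs_mul]
          exact mul_le_of_le_one_left (abs_nonneg _) (hφ.abs_deriv_le _)
      _ ≤ ‖layerMat V k‖ * enorm2 (D u) + ‖layerMat u k‖ * enorm2 F :=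
          (enorm2_add_le _ _).trans (add_le_add (enorm2_mulVec_le _ _) (enorm2_mulVec_le _ _))
      _ ≤ ‖V‖ * (‖V‖ ^ ℓ * ∑ k : Fin L with k.val < ℓ, ‖layerMat u k‖)
            + ‖layerMat u k‖ * ‖V‖ ^ (ℓ + 1) :=
          add_le_add (mul_le_mul (norm_layerMat_le V k) (hDu u) (enorm2_nonneg _) (norm_nonneg V))
            (mul_le_mul_of_nonneg_left hF (norm_nonneg _))
      _ = ‖V‖ ^ (ℓ + 1) * ∑ k : Fin L with k.val < ℓ + 1, ‖layerMat u k‖ := by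
          rw [sum_filter_lt_succ _ hl]; ring

lemma exists_hasFDerivAt_netOut (hφ : SmoothApproxReLU φ h) {x : Fin p → ℝ} (hx : enorm2 x ≤ 1)
    {V : Params L p} (hV : 1 ≤ ‖V‖) :
    ∃ G : Params L p →L[ℝ] ℝ, HasFDerivAt (fun w => netOut φ w x) G V ∧
      ‖G‖ ≤ Real.sqrt ((L : ℝ) + 1) * ‖V‖ ^ (L + 1) := by
  obtain ⟨D, hD, hDu⟩ := exists_hasFDerivAt_feat hφ hx hV L le_rfl
  obtain ⟨G, hG, hGu⟩ := LinearMap.exists_hasFDerivAt_bilinear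
    (dotProductBilin ℝ ℝ ∘ₗ outVecₗ (L := L) (p := p)) (hasFDerivAt_id V) hD
  refine ⟨G, hG, ContinuousLinearMap.opNorm_le_bound _ (by positivity) fun u => ?_⟩
  set F := feat φ V x L
  have hF : enorm2 F ≤ ‖V‖ ^ (L + 1) :=
    (enorm2_feat_le hφ V hx L le_rfl).trans (pow_le_pow_right₀ hV L.le_succ)
  have hall : ∑ k : Fin L with k.val < L, ‖layerMat u k‖ = ∑ k, ‖layerMat u k‖ :=
    Finset.sum_congr (Finset.filter_true_of_mem fun k _ => k.isLt) fun _ _ => rfl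
  calc ‖G u‖ = |outVec V ⬝ᵥ D u + outVec u ⬝ᵥ F| := by rw [hGu, Real.norm_eq_abs]; rfl
    _ ≤ enorm2 (outVec V) * enorm2 (D u) + enorm2 (outVec u) * enorm2 F :=
        (abs_add_le _ _).trans (add_le_add (abs_dotProduct_le _ _) (abs_dotProduct_le _ _))
    _ ≤ ‖V‖ * (‖V‖ ^ L * ∑ k, ‖layerMat u k‖) + enorm2 (outVec u) * ‖V‖ ^ (L + 1) := by
        rw [← hall]
        exact add_le_add (mul_le_mul (enorm2_outVec_le V) (hDu u) (enorm2_nonneg _) (norm_nonneg V))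
          (mul_le_mul_of_nonneg_left hF (enorm2_nonneg _))
    _ = ‖V‖ ^ (L + 1) * (∑ k, ‖layerMat u k‖ + enorm2 (outVec u)) := by ring
    _ ≤ ‖V‖ ^ (L + 1) * (Real.sqrt ((L : ℝ) + 1) * ‖u‖) := by
        gcongr
        exact sum_norm_layerMat_add_le u
    _ = Real.sqrt ((L : ℝ) + 1) * ‖V‖ ^ (L + 1) * ‖u‖ := by ring

end Network

lemma div_one_add_le_log_one_add {E : ℝ} (hE : 0 ≤ E) : E / (1 + E) ≤ Real.log (1 + E) := by
  have hE' : E / (1 + E) = 1 - (1 + E)⁻¹ := by field_simp; ring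
  exact hE' ▸ Real.one_sub_inv_le_log_of_pos (by positivity)

lemma hasDerivAt_log_one_add_exp_neg_mul (y t : ℝ) :
    HasDerivAt (fun t => Real.log (1 + Real.exp (-(y * t))))
      (-y * (Real.exp (-(y * t)) / (1 + Real.exp (-(y * t))))) t := by
  have hlin : HasDerivAt (fun t => -(y * t)) (-y) t := by
    simpa using (hasDerivAt_id t).const_mul (-y)
  convert (hlin.exp.const_add 1).log (by positivity) using 1
  ring

lemma mean_min_one_le {ι : Type*} [Fintype ι] (a : ι → ℝ) :
    (1 / (Fintype.card ι : ℝ)) * ∑ s, min (a s) 1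
      ≤ min ((1 / (Fintype.card ι : ℝ)) * ∑ s, a s) 1 := by
  refine le_min (by gcongr with s; exact min_le_left _ _) ?_
  calc (1 / (Fintype.card ι : ℝ)) * ∑ s, min (a s) 1
      ≤ (1 / (Fintype.card ι : ℝ)) * ∑ _s : ι, 1 := by gcongr with s; exact min_le_right _ _
    _ ≤ 1 := by simpa [← div_eq_inv_mul] using div_self_le_one (Fintype.card ι : ℝ)

section Loss

variable {L p : ℕ} {φ : ℝ → ℝ} {h : ℝ}

lemma exists_hasFDerivAt_lossS (hφ : SmoothApproxReLU φ h) {x : Fin p → ℝ} (hx : enorm2 x ≤ 1)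
    {y : ℝ} (hy : |y| ≤ 1) {V : Params L p} (hV : 1 ≤ ‖V‖) :
    ∃ D : Params L p →L[ℝ] ℝ, HasFDerivAt (lossS φ x y) D V ∧
      ‖D‖ ≤ min (lossS φ x y V) 1 * (Real.sqrt ((L : ℝ) + 1) * ‖V‖ ^ (L + 1)) := by
  obtain ⟨G, hG, hGn⟩ := exists_hasFDerivAt_netOut hφ hx hV
  set E := Real.exp (-(y * netOut φ V x))
  have hE : 0 < E := Real.exp_pos _
  refine ⟨_, (hasDerivAt_log_one_add_exp_neg_mul y _).comp_hasFDerivAt V hG, ?_⟩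
  have hσ : ‖-y * (E / (1 + E))‖ ≤ min (lossS φ x y V) 1 := by
    rw [norm_mul, norm_neg, Real.norm_eq_abs, Real.norm_of_nonneg (by positivity)]
    refine le_min ?_ ?_
    · exact mul_le_of_le_one_left (by positivity) hy |>.trans (div_one_add_le_log_one_add hE.le)
    · exact mul_le_one₀ hy (by positivity) ((div_le_one (by positivity)).2 (by linarith))
  rw [norm_smul]
  exact mul_le_mul hσ hGn (norm_nonneg _) ((norm_nonneg _).trans hσ)

end Loss

lemma loss_nonneg {L p n : ℕ} (φ : ℝ → ℝ) (x : Fin n → Fin p → ℝ) (y : Fin n → ℝ)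
    (V : Params L p) : 0 ≤ loss φ x y V :=
  mul_nonneg (by positivity) (Finset.sum_nonneg fun s _ =>
    Real.log_nonneg (le_add_of_nonneg_right (Real.exp_pos _).le))

theorem statement3_general
    (L p n : ℕ) (hL : 1 ≤ L) (hp : 1 ≤ p)
    (φ : ℝ → ℝ) (h : ℝ) (hφ : SmoothApproxReLU φ h)
    (x : Fin n → Fin p → ℝ) (y : Fin n → ℝ)
    (hx : ∀ s, enorm2 (x s) = 1) (hy : ∀ s, y s = 1 ∨ y s = -1)
    (V : Params L p) (hV : Real.sqrt ((L : ℝ) + 1 / 2) ≤ ‖V‖) :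
    ‖gradient (loss φ x y) V‖ ≤
      Real.sqrt (((L : ℝ) + 1) * p) * ‖V‖ ^ (L + 1) * min (loss φ x y V) 1 := by
  have hL1 : (1 : ℝ) ≤ L := by exact_mod_cast hL
  have hV1 : 1 ≤ ‖V‖ := (Real.one_le_sqrt.2 (by linarith)).trans hV
  have hy1 : ∀ s, |y s| ≤ 1 := fun s => by rcases hy s with hs | hs <;> simp [hs]
  choose D hD hDn using fun s => exists_hasFDerivAt_lossS hφ (hx s).le (hy1 s) hV1
  set C := Real.sqrt ((L : ℝ) + 1) * ‖V‖ ^ (L + 1)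
  have hJ : HasFDerivAt (loss φ x y) ((1 / (n : ℝ)) • ∑ s, D s) V :=
    (HasFDerivAt.fun_sum fun s _ => hD s).const_mul (1 / (n : ℝ))
  calc ‖gradient (loss φ x y) V‖ = ‖(1 / (n : ℝ)) • ∑ s, D s‖ := by
        rw [gradient, LinearIsometryEquiv.norm_map, hJ.fderiv]
    _ ≤ (1 / (n : ℝ)) * ∑ s, min (lossS φ (x s) (y s) V) 1 * C := by
        rw [norm_smul, Real.norm_of_nonneg (by positivity)]
        gcongr
        exact (norm_sum_le _ _).trans (Finset.sum_le_sum fun s _ => hDn s)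
    _ ≤ min (loss φ x y V) 1 * C := by
        rw [← Finset.sum_mul, ← mul_assoc]
        gcongr
        simpa [loss] using mean_min_one_le fun s => lossS φ (x s) (y s) V
    _ ≤ min (loss φ x y V) 1 * (Real.sqrt (((L : ℝ) + 1) * p) * ‖V‖ ^ (L + 1)) := by
        have hp1 : (1 : ℝ) ≤ p := by exact_mod_cast hp
        refine mul_le_mul_of_nonneg_left (mul_le_mul_of_nonneg_right ?_ (by positivity))
          (le_min (loss_nonneg φ x y V) zero_le_one)
        exact Real.sqrt_le_sqrt (le_mul_of_one_le_right (by positivity) hp1)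
    _ = _ := by ring

/-- Lemma `l:gradient_norm.upper`: an upper bound on the norm of the
gradient of the training loss. -/
theorem statement3
    (L p n : ℕ) (hL : 1 ≤ L) (hn : 1 ≤ n) (hp : 1 ≤ p)
    (φ : ℝ → ℝ) (h : ℝ) (hh0 : 0 < h) (hφ : SmoothApproxReLU φ h)
    (x : Fin n → Fin p → ℝ) (y : Fin n → ℝ)
    (hx : ∀ s, enorm2 (x s) = 1) (hy : ∀ s, y s = 1 ∨ y s = -1)
    (V : Params L p) (hV : Real.sqrt ((L : ℝ) + 1 / 2) ≤ ‖V‖) :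
    ‖gradient (loss φ x y) V‖ ≤
      Real.sqrt (((L : ℝ) + 1) * p) * ‖V‖ ^ (L + 1) * min (loss φ x y V) 1 :=
  statement3_general L p n hL hp φ h hφ x y hx hy V hV
end
end

section
/- Suppose L ≥ 1, n ≥ 3, and the activation is h-smoothly approximately ReLU (for some h > 0). For any weights V, if the training loss satisfies J(V) ≤ 2/n^{1+24L}, then ‖V‖ > √(L+1) (and in particular ‖V‖ ≥ √2). -/
/-
If `‖V‖² ≤ L + 1`, then by AM–GM the squared Frobenius norms of the `L + 1` layers have product
at most `1`. Since `|φ z| ≤ |z|`, every layer multiplies the squared Euclidean norm of the signal by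
at most its squared Frobenius norm, so `|f_V(x)| ≤ 1` on unit inputs. Every example then costs
at least `ln(1 + e⁻¹) > 1/4`, whereas `2 / n^(1+24L) ≤ 2/27`.
-/

open scoped BigOperators
noncomputable section

def enorm₂ {p : ℕ} (v : Fin p → ℝ) : ℝ := Real.sqrt (∑ i, v i ^ 2)

open Finset Matrix

theorem abs_le_abs_of_abs_deriv_le_one {φ : ℝ → ℝ} (hd : Differentiable ℝ φ) (h0 : φ 0 = 0)
    (hφ' : ∀ z, |deriv φ z| ≤ 1) (z : ℝ) : |φ z| ≤ |z| := by
  have hlip : LipschitzWith 1 φ :=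
    lipschitzWith_of_nnnorm_deriv_le hd fun z => by
      rw [← NNReal.coe_le_coe]
      simpa [Real.norm_eq_abs] using hφ' z
  simpa [h0, Real.dist_eq] using hlip.dist_le_mul z 0

theorem Finset.prod_le_one_of_sum_le_card {ι : Type*} (s : Finset ι) {a : ι → ℝ}
    (ha : ∀ i ∈ s, 0 ≤ a i) (hsum : ∑ i ∈ s, a i ≤ #s) : ∏ i ∈ s, a i ≤ 1 := by
  have hexp : ∀ t : ℝ, t ≤ Real.exp (t - 1) := fun t => by
    linarith [Real.add_one_le_exp (t - 1)]
  calc ∏ i ∈ s, a i ≤ ∏ i ∈ s, Real.exp (a i - 1) := prod_le_prod ha fun i _ => hexp (a i)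
    _ = Real.exp (∑ i ∈ s, a i - #s) := by
        rw [← Real.exp_sum, sum_sub_distrib, sum_const, nsmul_one]
    _ ≤ 1 := Real.exp_le_one_iff.mpr (by linarith)

theorem Matrix.sum_sq_mulVec_le {m k : Type*} [Fintype m] [Fintype k]
    (A : Matrix m k ℝ) (v : k → ℝ) :
    ∑ i, (A *ᵥ v) i ^ 2 ≤ (∑ i, ∑ j, A i j ^ 2) * ∑ j, v j ^ 2 := by
  rw [sum_mul]
  exact sum_le_sum fun i _ => sum_mul_sq_le_sq_mul_sq _ _ _

theorem quarter_lt_log_one_add_exp_neg_one : (1 : ℝ) / 4 < Real.log (1 + Real.exp (-1)) := by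
  have hexp : (1 : ℝ) / 3 < Real.exp (-1) := by
    rw [Real.exp_neg, lt_inv_comm₀ (by norm_num) (Real.exp_pos 1)]
    linarith [Real.exp_one_lt_d9]
  have hlog : Real.log (3 / 4) ≤ 3 / 4 - 1 := Real.log_le_sub_one_of_pos (by norm_num)
  calc (1 : ℝ) / 4 ≤ Real.log (4 / 3) := by
        rw [← inv_div (3 : ℝ) 4, Real.log_inv]; linarith
    _ < Real.log (1 + Real.exp (-1)) := Real.log_lt_log (by norm_num) (by linarith)

section Network

variable {L p : ℕ}

/-- `layerSqNorm w k = ‖V_{k+1}‖_F²` in the paper's numbering; `k = L` is the output layer. -/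
def layerSqNorm (w : Params L p) (k : ℕ) : ℝ :=
  if hk : k < L then ∑ i, ∑ j, layerMat w ⟨k, hk⟩ i j ^ 2 else ∑ j, outVec w j ^ 2

theorem layerSqNorm_nonneg (w : Params L p) (k : ℕ) : 0 ≤ layerSqNorm w k := by
  unfold layerSqNorm; split_ifs <;> positivity

theorem norm_sq_eq_sum_layerSqNorm (w : Params L p) :
    ‖w‖ ^ 2 = ∑ k ∈ range (L + 1), layerSqNorm w k := by
  rw [EuclideanSpace.norm_sq_eq, Fintype.sum_sum_type, sum_range_succ,
    ← Fin.sum_univ_eq_sum_range, Fintype.sum_prod_type]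
  simp [layerSqNorm, layerMat, outVec, Fintype.sum_prod_type]

theorem sum_sq_feat_le {φ : ℝ → ℝ} (hφ : ∀ z, |φ z| ≤ |z|) (w : Params L p) (x : Fin p → ℝ)
    {k : ℕ} (hk : k ≤ L) :
    ∑ i, feat φ w x k i ^ 2 ≤ (∏ m ∈ range k, layerSqNorm w m) * ∑ i, x i ^ 2 := by
  induction k with
  | zero => simp [feat]
  | succ k ih =>
    have hkL : k < L := hk
    set A := layerMat w ⟨k, hkL⟩
    calc ∑ i, feat φ w x (k + 1) i ^ 2 = ∑ i, φ ((A *ᵥ feat φ w x k) i) ^ 2 := by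
          rw [feat, dif_pos hkL]
      _ ≤ ∑ i, (A *ᵥ feat φ w x k) i ^ 2 :=
          sum_le_sum fun i _ => sq_le_sq.mpr (hφ _)
      _ ≤ layerSqNorm w k * ∑ i, feat φ w x k i ^ 2 := by
          simpa only [layerSqNorm, dif_pos hkL] using A.sum_sq_mulVec_le _
      _ ≤ layerSqNorm w k * ((∏ m ∈ range k, layerSqNorm w m) * ∑ i, x i ^ 2) :=
          mul_le_mul_of_nonneg_left (ih hkL.le) (layerSqNorm_nonneg w k)
      _ = _ := by rw [prod_range_succ]; ring

theorem netOut_sq_le {φ : ℝ → ℝ} (hφ : ∀ z, |φ z| ≤ |z|) (w : Params L p) (x : Fin p → ℝ) :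
    netOut φ w x ^ 2 ≤ (∏ k ∈ range (L + 1), layerSqNorm w k) * ∑ i, x i ^ 2 :=
  calc netOut φ w x ^ 2 ≤ layerSqNorm w L * ∑ i, feat φ w x L i ^ 2 := by
        simpa only [netOut, layerSqNorm, lt_irrefl, dif_neg, not_false_eq_true]
          using sum_mul_sq_le_sq_mul_sq univ (outVec w) (feat φ w x L)
    _ ≤ layerSqNorm w L * ((∏ k ∈ range L, layerSqNorm w k) * ∑ i, x i ^ 2) :=
        mul_le_mul_of_nonneg_left (sum_sq_feat_le hφ w x le_rfl) (layerSqNorm_nonneg w L)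
    _ = _ := by rw [prod_range_succ]; ring

theorem abs_netOut_le_one_of_norm_sq_le {φ : ℝ → ℝ} (hφ : ∀ z, |φ z| ≤ |z|) {w : Params L p}
    (hw : ‖w‖ ^ 2 ≤ L + 1) {x : Fin p → ℝ} (hx : enorm₂ x = 1) : |netOut φ w x| ≤ 1 := by
  have hx1 : ∑ i, x i ^ 2 = 1 := by
    rwa [enorm₂, Real.sqrt_eq_one] at hx
  have hprod : ∏ k ∈ range (L + 1), layerSqNorm w k ≤ 1 :=
    prod_le_one_of_sum_le_card _ (fun k _ => layerSqNorm_nonneg w k) (by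
      rw [← norm_sq_eq_sum_layerSqNorm, card_range]; exact_mod_cast hw)
  rw [← sq_le_one_iff_abs_le_one]
  calc netOut φ w x ^ 2 ≤ (∏ k ∈ range (L + 1), layerSqNorm w k) * ∑ i, x i ^ 2 :=
        netOut_sq_le hφ w x
    _ ≤ 1 := by rwa [hx1, mul_one]

end Network

theorem log_one_add_exp_neg_one_le_lossS {L p : ℕ} {φ : ℝ → ℝ} {x : Fin p → ℝ} {y : ℝ}
    {w : Params L p} (h : |y * netOut φ w x| ≤ 1) :
    Real.log (1 + Real.exp (-1)) ≤ lossS φ x y w := by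
  unfold lossS
  gcongr
  linarith [le_abs_self (y * netOut φ w x)]

theorem le_loss_of_forall_le_lossS {L p n : ℕ} [NeZero n] {φ : ℝ → ℝ} {x : Fin n → Fin p → ℝ}
    {y : Fin n → ℝ} {w : Params L p} {c : ℝ} (h : ∀ s, c ≤ lossS φ (x s) (y s) w) :
    c ≤ loss φ x y w := by
  have hn : (0 : ℝ) < n := by exact_mod_cast Nat.pos_of_neZero n
  have := sum_le_sum fun s (_ : s ∈ univ) => h s
  rw [sum_const, card_univ, Fintype.card_fin, nsmul_eq_mul] at this
  rw [loss, one_div, ← div_eq_inv_mul, le_div_iff₀ hn]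
  linarith

theorem statement10_general
    (L p n : ℕ) (hL : 1 ≤ L) (hn : 3 ≤ n)
    (φ : ℝ → ℝ) (h : ℝ) (hφ : SmoothApproxReLU φ h)
    (x : Fin n → Fin p → ℝ) (y : Fin n → ℝ)
    (hx : ∀ s, enorm₂ (x s) = 1) (hy : ∀ s, y s = 1 ∨ y s = -1)
    (V : Params L p)
    (hJ : loss φ x y V ≤ 2 / (n : ℝ) ^ (1 + 24 * L)) :
    Real.sqrt ((L : ℝ) + 1) < ‖V‖ ∧ Real.sqrt 2 ≤ ‖V‖ := by
  obtain ⟨hd, h0, -, hφ', -⟩ := hφ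
  have hφabs := abs_le_abs_of_abs_deriv_le_one hd h0 hφ'
  have hV : Real.sqrt ((L : ℝ) + 1) < ‖V‖ := by
    by_contra! hV
    have hV2 : ‖V‖ ^ 2 ≤ L + 1 := (Real.le_sqrt (norm_nonneg V) (by positivity)).mp hV
    have hout (s : Fin n) : |y s * netOut φ V (x s)| ≤ 1 := by
      have hys : |y s| = 1 := by rcases hy s with hys | hys <;> simp [hys]
      rw [abs_mul, hys, one_mul]
      exact abs_netOut_le_one_of_norm_sq_le hφabs hV2 (hx s)
    have : NeZero n := ⟨by omega⟩
    have hloss : 1 / 4 < loss φ x y V := quarter_lt_log_one_add_exp_neg_one.trans_le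
      (le_loss_of_forall_le_lossS fun s => log_one_add_exp_neg_one_le_lossS (hout s))
    have hpow : (27 : ℝ) ≤ (n : ℝ) ^ (1 + 24 * L) :=
      calc (27 : ℝ) = 3 ^ 3 := by norm_num
        _ ≤ 3 ^ (1 + 24 * L) := pow_le_pow_right₀ (by norm_num) (by omega)
        _ ≤ (n : ℝ) ^ (1 + 24 * L) := pow_le_pow_left₀ (by norm_num) (by exact_mod_cast hn) _
    have : 2 / (n : ℝ) ^ (1 + 24 * L) ≤ 2 / 27 :=
      div_le_div_of_nonneg_left (by norm_num) (by norm_num) hpow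
    linarith
  refine ⟨hV, le_trans (Real.sqrt_le_sqrt ?_) hV.le⟩
  have : (1 : ℝ) ≤ L := by exact_mod_cast hL
  linarith

/-- Lemma `l:aux.lower.bound.norm.weight.vector`: a small training loss
forces the collective weight norm to be large. -/
theorem statement10
    (L p n : ℕ) (hL : 1 ≤ L) (hn : 3 ≤ n) (hp : 1 ≤ p)
    (φ : ℝ → ℝ) (h : ℝ) (hh0 : 0 < h) (hφ : SmoothApproxReLU φ h)
    (x : Fin n → Fin p → ℝ) (y : Fin n → ℝ)
    (hx : ∀ s, enorm₂ (x s) = 1) (hy : ∀ s, y s = 1 ∨ y s = -1)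
    (V : Params L p)
    (hJ : loss φ x y V ≤ 2 / (n : ℝ) ^ (1 + 24 * L)) :
    Real.sqrt ((L : ℝ) + 1) < ‖V‖ ∧ Real.sqrt 2 ≤ ‖V‖ :=
  statement10_general L p n hL hn φ h hφ x y hx hy V hJ
end
end

section
/- For integers 1 ≤ k ≤ p, let S ⊆ ℝ^p be the set of k-sparse unit vectors (vectors with at most k nonzero coordinates and Euclidean norm 1). There exist a finite set N of k-sparse unit vectors in ℝ^p with |N| ≤ C(p,k)·9^k (where C(p,k) is the binomial coefficient) and a map ζ : S → N such that for every s ∈ S, ‖s − ζ(s)‖ ≤ 1/4 and the vector s − ζ(s) has at most k nonzero coordinates. -/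
/-!
A maximal `ε`-separated subset of the unit sphere of a `d`-dimensional space is an `ε`-net of
it, and the disjoint balls of radius `ε / 2` around its points lie in the ball of radius
`1 + ε / 2`, so comparing volumes it has at most `(1 + 2 / ε) ^ d` points; for `ε = 1 / 4` this
is `9 ^ d`. Every `k`-sparse vector lies in one of the `C(p, k)` coordinate subspaces spanned by
`k` coordinates. The union of nets of their unit spheres is the required net, and the
difference between a vector and its net point stays in the same subspace, hence is `k`-sparse.
-/
open Metric MeasureTheory Module
open scoped NNReal ENNReal

theorem card_le_of_isSeparated_closedBall {E : Type*} [NormedAddCommGroup E] [NormedSpace ℝ E]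
    [FiniteDimensional ℝ E] {ε : ℝ≥0} (hε : 0 < ε) (C : Finset E)
    (hC : (C : Set E) ⊆ closedBall 0 1) (hsep : IsSeparated ε (C : Set E)) :
    (C.card : ℝ) ≤ (1 + 2 / ε) ^ finrank ℝ E := by
  borelize E
  set d := finrank ℝ E
  set μ : Measure E := Measure.addHaar
  set δ : ℝ := ε / 2
  have hδ : 0 < δ := by positivity
  have hdisj : (C : Set E).PairwiseDisjoint fun c => ball c δ := by
    intro c hc c' hc' hne
    have hεcc' : (ε : ℝ) < dist c c' := by
      have : (ε : ℝ≥0∞) < edist c c' := hsep hc hc' hne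
      rwa [edist_nndist, ENNReal.coe_lt_coe, ← NNReal.coe_lt_coe, coe_nndist] at this
    exact ball_disjoint_ball (by simp only [δ]; linarith)
  have hsub : (⋃ c ∈ C, ball c δ) ⊆ ball 0 (1 + δ) :=
    Set.iUnion₂_subset fun c hc => ball_subset_ball' (by
      rw [add_comm]; gcongr; exact hC hc)
  have hvol : (C.card : ℝ≥0∞) * ENNReal.ofReal (δ ^ d) * μ (ball 0 1)
      ≤ ENNReal.ofReal ((1 + δ) ^ d) * μ (ball 0 1) := by
    calc (C.card : ℝ≥0∞) * ENNReal.ofReal (δ ^ d) * μ (ball 0 1)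
        = μ (⋃ c ∈ C, ball c δ) := by
          rw [measure_biUnion_finset hdisj fun c _ => measurableSet_ball]
          simp [μ.addHaar_ball_of_pos _ hδ, mul_assoc, d]
      _ ≤ μ (ball 0 (1 + δ)) := measure_mono hsub
      _ = ENNReal.ofReal ((1 + δ) ^ d) * μ (ball 0 1) :=
          μ.addHaar_ball_of_pos _ (by positivity)
  have hreal : (C.card : ℝ) * δ ^ d ≤ (1 + δ) ^ d := by
    have := (ENNReal.mul_le_mul_iff_left (measure_ball_pos μ _ one_pos).ne'
      measure_ball_lt_top.ne).1 hvol
    rw [← ENNReal.ofReal_natCast, ← ENNReal.ofReal_mul (by positivity)] at this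
    exact (ENNReal.ofReal_le_ofReal_iff (by positivity)).1 this
  calc (C.card : ℝ) = C.card * δ ^ d / δ ^ d := by field_simp
    _ ≤ (1 + δ) ^ d / δ ^ d := by gcongr
    _ = (1 + 2 / ε) ^ d := by rw [← div_pow]; congr 1; simp only [δ]; field_simp; ring

theorem packingNumber_ne_top_of_totallyBounded {X : Type*} [PseudoEMetricSpace X] {ε : ℝ≥0}
    (hε : ε ≠ 0) {A : Set X} (hA : TotallyBounded A) : packingNumber ε A ≠ ⊤ := by
  obtain ⟨C, -, hCfin, hCcover⟩ := exists_finite_isCover_of_totallyBounded (ε := ε / 2)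
    (by positivity) hA
  refine ne_top_of_le_ne_top (Set.encard_ne_top_iff.2 hCfin) ?_
  calc packingNumber ε A = packingNumber (2 * (ε / 2)) A := by rw [mul_div_cancel₀ _ two_ne_zero]
    _ ≤ externalCoveringNumber (ε / 2) A := packingNumber_two_mul_le_externalCoveringNumber _ _
    _ ≤ C.encard := hCcover.externalCoveringNumber_le_encard

theorem exists_finset_isCover_of_subset_closedBall {E : Type*} [NormedAddCommGroup E]
    [NormedSpace ℝ E] [FiniteDimensional ℝ E] {ε : ℝ≥0} (hε : 0 < ε) {A : Set E}
    (hA : A ⊆ closedBall 0 1) :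
    ∃ N : Finset E, (N : Set E) ⊆ A ∧ (N.card : ℝ) ≤ (1 + 2 / ε) ^ finrank ℝ E ∧
      IsCover ε A N := by
  have htop : packingNumber ε A ≠ ⊤ :=
    packingNumber_ne_top_of_totallyBounded hε.ne'
      ((isCompact_closedBall 0 1).totallyBounded.subset hA)
  have hfin : (maximalSeparatedSet ε A).Finite :=
    Set.encard_ne_top_iff.1 (by rwa [encard_maximalSeparatedSet htop])
  refine ⟨hfin.toFinset, ?_, card_le_of_isSeparated_closedBall hε _ ?_ ?_, ?_⟩
  · simpa using maximalSeparatedSet_subset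
  · simpa using maximalSeparatedSet_subset.trans hA
  · simpa using isSeparated_maximalSeparatedSet
  · simpa using isCover_maximalSeparatedSet htop

theorem Submodule.exists_finset_unit_net {E : Type*} [NormedAddCommGroup E] [NormedSpace ℝ E]
    [FiniteDimensional ℝ E] (V : Submodule ℝ E) {ε : ℝ≥0} (hε : 0 < ε) :
    ∃ N : Finset E, (∀ v ∈ N, v ∈ V ∧ ‖v‖ = 1) ∧ (N.card : ℝ) ≤ (1 + 2 / ε) ^ finrank ℝ V ∧
      ∀ x ∈ V, ‖x‖ = 1 → ∃ y ∈ N, ‖x - y‖ ≤ ε := by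
  obtain ⟨N, hNsphere, hNcard, hNcover⟩ :=
    exists_finset_isCover_of_subset_closedBall hε
      (sphere_subset_closedBall (x := (0 : V)) (ε := 1))
  refine ⟨N.map (Function.Embedding.subtype _), ?_, by simpa using hNcard, fun x hxV hx => ?_⟩
  · simp only [Finset.mem_map, Function.Embedding.coe_subtype]
    rintro _ ⟨v, hv, rfl⟩
    exact ⟨v.2, by simpa using hNsphere hv⟩
  · have hxsphere : (⟨x, hxV⟩ : V) ∈ sphere 0 1 := by simpa using hx
    obtain ⟨y, hy, hxy⟩ :=
      Set.mem_iUnion₂.1 (isCover_iff_subset_iUnion_closedBall.1 hNcover hxsphere)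
    exact ⟨y, Finset.mem_map_of_mem _ hy, by simpa [dist_eq_norm] using hxy⟩

section Sparse

variable {ι : Type*}

def supportedOn (T : Finset ι) : Submodule ℝ (EuclideanSpace ℝ ι) where
  carrier := {x | ∀ i ∉ T, x i = 0}
  add_mem' hx hy i hi := by simp [hx i hi, hy i hi]
  zero_mem' _ _ := rfl
  smul_mem' c x hx i hi := by simp [hx i hi]

variable [Fintype ι]

theorem finrank_supportedOn_le (T : Finset ι) : finrank ℝ (supportedOn T) ≤ T.card := by
  let restrict : supportedOn T →ₗ[ℝ] (T → ℝ) :=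
    (LinearMap.pi fun i : T => (EuclideanSpace.proj (𝕜 := ℝ) (i : ι)).toLinearMap) ∘ₗ
      (supportedOn T).subtype
  have hinj : Function.Injective restrict := by
    intro x y hxy
    ext i
    by_cases hi : i ∈ T
    · exact congr_fun hxy ⟨i, hi⟩
    · rw [x.2 i hi, y.2 i hi]
  simpa using LinearMap.finrank_le_finrank_of_injective hinj

theorem ncard_support_le_of_mem_supportedOn {T : Finset ι} {x : EuclideanSpace ℝ ι}
    (hx : x ∈ supportedOn T) : {i | x i ≠ 0}.ncard ≤ T.card := by
  rw [← Set.ncard_coe_finset]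
  exact Set.ncard_le_ncard (fun i hi => by_contra fun hiT => hi (hx i hiT))

theorem exists_mem_supportedOn_of_ncard_support_le {k : ℕ} (hk : k ≤ Fintype.card ι)
    {x : EuclideanSpace ℝ ι} (hx : {i | x i ≠ 0}.ncard ≤ k) :
    ∃ T ∈ Finset.univ.powersetCard k, x ∈ supportedOn T := by
  classical
  have hcard : (Finset.univ.filter fun i => x i ≠ 0).card ≤ k := by
    rwa [← Set.ncard_coe_finset, Finset.coe_filter_univ]
  obtain ⟨T, hsuppT, -, hTcard⟩ :=
    Finset.exists_subsuperset_card_eq (Finset.subset_univ _) hcard (by simpa using hk)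
  refine ⟨T, Finset.mem_powersetCard_univ.2 hTcard, fun i hi => ?_⟩
  by_contra hxi
  exact hi (hsuppT (by simpa using hxi))

theorem exists_finset_sparse_unit_net {k : ℕ} (hk : k ≤ Fintype.card ι) {ε : ℝ≥0} (hε : 0 < ε) :
    ∃ N : Finset (EuclideanSpace ℝ ι),
      (N.card : ℝ) ≤ (Fintype.card ι).choose k * (1 + 2 / ε) ^ k ∧
      (∀ v ∈ N, ‖v‖ = 1 ∧ {i | v i ≠ 0}.ncard ≤ k) ∧
      ∀ s : EuclideanSpace ℝ ι, ‖s‖ = 1 → {i | s i ≠ 0}.ncard ≤ k →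
        ∃ z ∈ N, ‖s - z‖ ≤ ε ∧ {i | (s - z) i ≠ 0}.ncard ≤ k := by
  classical
  choose net hnet_mem hnet_card hnet_cover using
    fun T : Finset ι => (supportedOn T).exists_finset_unit_net hε
  set 𝒯 : Finset (Finset ι) := Finset.univ.powersetCard k
  have hk_card : ∀ T ∈ 𝒯, T.card = k := fun T hT => Finset.mem_powersetCard_univ.1 hT
  refine ⟨𝒯.biUnion net, ?_, ?_, ?_⟩
  · calc ((𝒯.biUnion net).card : ℝ) ≤ ∑ T ∈ 𝒯, ((net T).card : ℝ) := by
          exact_mod_cast Finset.card_biUnion_le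
      _ ≤ ∑ _T ∈ 𝒯, (1 + 2 / (ε : ℝ)) ^ k := Finset.sum_le_sum fun T hT =>
          (hnet_card T).trans (pow_le_pow_right₀ (le_add_of_nonneg_right (by positivity))
            ((finrank_supportedOn_le T).trans (hk_card T hT).le))
      _ = (Fintype.card ι).choose k * (1 + 2 / ε) ^ k := by simp [𝒯, Finset.card_powersetCard]
  · intro v hv
    obtain ⟨T, hT, hvT⟩ := Finset.mem_biUnion.1 hv
    exact ⟨(hnet_mem T v hvT).2,
      hk_card T hT ▸ ncard_support_le_of_mem_supportedOn (hnet_mem T v hvT).1⟩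
  · intro s hs hsk
    obtain ⟨T, hT, hsT⟩ := exists_mem_supportedOn_of_ncard_support_le hk hsk
    obtain ⟨z, hz, hsz⟩ := hnet_cover T s hsT hs
    exact ⟨z, Finset.mem_biUnion.2 ⟨T, hT, hz⟩, hsz, hk_card T hT ▸
      ncard_support_le_of_mem_supportedOn (sub_mem hsT (hnet_mem T z hz).1)⟩

end Sparse

theorem statement12_general (p k : ℕ) (hkp : k ≤ p) :
    ∃ (N : Finset (EuclideanSpace ℝ (Fin p)))
      (ζ : EuclideanSpace ℝ (Fin p) → EuclideanSpace ℝ (Fin p)),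
      N.card ≤ Nat.choose p k * 9 ^ k ∧
      (∀ v ∈ N, ‖v‖ = 1 ∧ {i | v i ≠ 0}.ncard ≤ k) ∧
      (∀ s : EuclideanSpace ℝ (Fin p), ‖s‖ = 1 → {i | s i ≠ 0}.ncard ≤ k →
        ζ s ∈ N ∧ ‖s - ζ s‖ ≤ 1 / 4 ∧ {i | (s - ζ s) i ≠ 0}.ncard ≤ k) := by
  obtain ⟨N, hNcard, hNsparse, hNnet⟩ :=
    exists_finset_sparse_unit_net (ι := Fin p) (by simpa using hkp) (ε := 1 / 4) (by norm_num)
  choose! ζ hζN hζ using hNnet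
  refine ⟨N, ζ, ?_, hNsparse, fun s hs hsk => ⟨hζN s hs hsk, ?_⟩⟩
  · have hNcard' : (N.card : ℝ) ≤ p.choose k * 9 ^ k := by norm_num at hNcard; exact hNcard
    exact_mod_cast hNcard'
  · exact_mod_cast hζ s hs hsk

/-- Lemma `l:covering_numbers_sparse_vectors`: there is a `1/4`-net `N`
of the set of `k`-sparse unit vectors of `ℝ^p`, of cardinality at most `C(p,k)·9^k`,
together with a map `ζ` sending every `k`-sparse unit vector `s` to a net point with
`‖s - ζ s‖ ≤ 1/4` and `s - ζ s` again `k`-sparse. -/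
theorem statement12 (p k : ℕ) (hk1 : 1 ≤ k) (hkp : k ≤ p) :
    ∃ (N : Finset (EuclideanSpace ℝ (Fin p)))
      (ζ : EuclideanSpace ℝ (Fin p) → EuclideanSpace ℝ (Fin p)),
      N.card ≤ Nat.choose p k * 9 ^ k ∧
      (∀ v ∈ N, ‖v‖ = 1 ∧ {i | v i ≠ 0}.ncard ≤ k) ∧
      (∀ s : EuclideanSpace ℝ (Fin p), ‖s‖ = 1 → {i | s i ≠ 0}.ncard ≤ k →
        ζ s ∈ N ∧ ‖s - ζ s‖ ≤ 1 / 4 ∧ {i | (s - ζ s) i ≠ 0}.ncard ≤ k) :=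
  statement12_general p k hkp
end
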